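/- Let 𝒞 be a finite set of constructive, modality-free (propositional) formulas. Then the calculus LJ+𝒞 has the Visser–Harrop property: whenever LJ+𝒞 proves Γ, {A_i → B_i}_{i∈I} ⇒ C ∨ D, where Γ is a finite multiset of Harrop formulas and I is a finite (possibly empty) index set, then LJ+𝒞 proves Γ, {A_i → B_i}_{i∈I} ⇒ C, or Γ, {A_i → B_i}_{i∈I} ⇒ D, or Γ, {A_i → B_i}_{i∈I} ⇒ A_i for some i ∈ I. In particular, LJ itself (𝒞 = ∅) has the Visser–Harrop property and hence the disjunction property. -/
import Mathlib


set_option autoImplicit false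

namespace UPT

/-- Modal formulas over atoms of type `α` (the language `ℒ = {∧,∨,→,⊤,⊥,□,◇}`). -/
inductive Fml (α : Type) : Type where
  | atom : α → Fml α
  | top  : Fml α
  | bot  : Fml α
  | and  : Fml α → Fml α → Fml α
  | or   : Fml α → Fml α → Fml α
  | imp  : Fml α → Fml α → Fml α
  | box  : Fml α → Fml α
  | dia  : Fml α → Fml α
deriving DecidableEq

variable {α β : Type}

/-- Simultaneous substitution of formulas for atoms. -/
def Fml.subst (σ : β → Fml α) : Fml β → Fml α
  | .atom b  => σ b
  | .top     => .top
  | .bot     => .bot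
  | .and A B => .and (A.subst σ) (B.subst σ)
  | .or A B  => .or (A.subst σ) (B.subst σ)
  | .imp A B => .imp (A.subst σ) (B.subst σ)
  | .box A   => .box (A.subst σ)
  | .dia A   => .dia (A.subst σ)

/-- A sequent: a finite multiset antecedent together with a succedent
containing at most one formula. -/
abbrev Seq (α : Type) : Type := Multiset (Fml α) × Option (Fml α)

/-- A rule set relates a (finite) list of premise sequents to a conclusion sequent. -/
abbrev RuleSet (α : Type) : Type := List (Seq α) → Seq α → Prop

/-- The axioms and rules of the single-conclusion sequent calculus `LJ`, stated
schematically: they are closed under substituting arbitrary formulas for atoms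
and arbitrary multisets (resp. succedents) for the context variables. -/
inductive LJRule : List (Seq α) → Seq α → Prop where
  | id (Γ : Multiset (Fml α)) (A : Fml α) : LJRule [] (A ::ₘ Γ, some A)
  | botL (Γ : Multiset (Fml α)) (Δ : Option (Fml α)) : LJRule [] (.bot ::ₘ Γ, Δ)
  | topR (Γ : Multiset (Fml α)) : LJRule [] (Γ, some .top)
  | wL (A : Fml α) (Γ : Multiset (Fml α)) (Δ : Option (Fml α)) :
      LJRule [(Γ, Δ)] (A ::ₘ Γ, Δ)
  | wR (A : Fml α) (Γ : Multiset (Fml α)) : LJRule [(Γ, none)] (Γ, some A)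
  | cL (A : Fml α) (Γ : Multiset (Fml α)) (Δ : Option (Fml α)) :
      LJRule [(A ::ₘ A ::ₘ Γ, Δ)] (A ::ₘ Γ, Δ)
  | cut (A : Fml α) (Γ : Multiset (Fml α)) (Δ : Option (Fml α)) :
      LJRule [(Γ, some A), (A ::ₘ Γ, Δ)] (Γ, Δ)
  | andL₁ (A B : Fml α) (Γ : Multiset (Fml α)) (Δ : Option (Fml α)) :
      LJRule [(A ::ₘ Γ, Δ)] (.and A B ::ₘ Γ, Δ)
  | andL₂ (A B : Fml α) (Γ : Multiset (Fml α)) (Δ : Option (Fml α)) :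
      LJRule [(B ::ₘ Γ, Δ)] (.and A B ::ₘ Γ, Δ)
  | andR (A B : Fml α) (Γ : Multiset (Fml α)) :
      LJRule [(Γ, some A), (Γ, some B)] (Γ, some (.and A B))
  | orL (A B : Fml α) (Γ : Multiset (Fml α)) (Δ : Option (Fml α)) :
      LJRule [(A ::ₘ Γ, Δ), (B ::ₘ Γ, Δ)] (.or A B ::ₘ Γ, Δ)
  | orR₁ (A B : Fml α) (Γ : Multiset (Fml α)) : LJRule [(Γ, some A)] (Γ, some (.or A B))
  | orR₂ (A B : Fml α) (Γ : Multiset (Fml α)) : LJRule [(Γ, some B)] (Γ, some (.or A B))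
  | impL (A B : Fml α) (Γ : Multiset (Fml α)) (Δ : Option (Fml α)) :
      LJRule [(Γ, some A), (B ::ₘ Γ, Δ)] (.imp A B ::ₘ Γ, Δ)
  | impR (A B : Fml α) (Γ : Multiset (Fml α)) :
      LJRule [(A ::ₘ Γ, some B)] (Γ, some (.imp A B))

/-- The rule `K_□`: from `Γ ⇒ A` infer `□Γ ⇒ □A`. -/
inductive KBoxRule : List (Seq α) → Seq α → Prop where
  | mk (Γ : Multiset (Fml α)) (A : Fml α) :
      KBoxRule [(Γ, some A)] (Γ.map Fml.box, some (.box A))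

/-- The rule `K_◇`: from `Γ, A ⇒ B` infer `□Γ, ◇A ⇒ ◇B`. -/
inductive KDiaRule : List (Seq α) → Seq α → Prop where
  | mk (Γ : Multiset (Fml α)) (A B : Fml α) :
      KDiaRule [(A ::ₘ Γ, some B)] (.dia A ::ₘ Γ.map Fml.box, some (.dia B))

/-- The rule `◇L`: from `Γ, A ⇒ B` infer `Γ, ◇A ⇒ ◇B`. -/
inductive DiaLRule : List (Seq α) → Seq α → Prop where
  | mk (Γ : Multiset (Fml α)) (A B : Fml α) :
      DiaLRule [(A ::ₘ Γ, some B)] (.dia A ::ₘ Γ, some (.dia B))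

/-- Adding a set `Ax` of axioms to a calculus: the initial sequents `⇒ σ(A)`
for every substitution instance `σ(A)` of every `A ∈ Ax`. -/
def axRule (Ax : Fml α → Prop) : RuleSet α := fun ps c =>
  ps = [] ∧ ∃ (A : Fml α) (σ : α → Fml α), Ax A ∧ c = ((0 : Multiset (Fml α)), some (A.subst σ))

/-- Using a set of sequents as additional initial sequents (assumptions). -/
def hypRule (H : Set (Seq α)) : RuleSet α := fun ps c => ps = [] ∧ c ∈ H

/-- The sequent calculus `LJ+Ax`. -/
def LJSys (Ax : Fml α → Prop) : RuleSet α := fun ps c => LJRule ps c ∨ axRule Ax ps c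

/-- The sequent calculus `CK+Ax = LJ + K_□ + K_◇ + Ax`. -/
def CKSys (Ax : Fml α → Prop) : RuleSet α := fun ps c =>
  LJRule ps c ∨ KBoxRule ps c ∨ KDiaRule ps c ∨ axRule Ax ps c

/-- The sequent calculus `CK_□+Ax = LJ + K_□ + Ax`. -/
def CKBoxSys (Ax : Fml α → Prop) : RuleSet α := fun ps c =>
  LJRule ps c ∨ KBoxRule ps c ∨ axRule Ax ps c

/-- The sequent calculus `BLL+Ax = LJ + ◇L + Ax`. -/
def BLLSys (Ax : Fml α → Prop) : RuleSet α := fun ps c =>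
  LJRule ps c ∨ DiaLRule ps c ∨ axRule Ax ps c

/-- Provability of a sequent in the calculus generated by a rule set. -/
inductive Derives (R : RuleSet α) : Multiset (Fml α) → Option (Fml α) → Prop where
  | step {ps : List (Seq α)} {c : Seq α} (hr : R ps c)
      (hp : ∀ p ∈ ps, Derives R p.1 p.2) : Derives R c.1 c.2

/-- Basic formulas: generated from atoms, `⊤`, `⊥` by `∧`, `∨`, `◇`. -/
inductive Basic : Fml α → Prop where
  | atom (a : α) : Basic (.atom a)
  | top : Basic (.top : Fml α)
  | bot : Basic (.bot : Fml α)
  | and {A B : Fml α} : Basic A → Basic B → Basic (.and A B)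
  | or {A B : Fml α} : Basic A → Basic B → Basic (.or A B)
  | dia {A : Fml α} : Basic A → Basic (.dia A)

/-- Almost positive formulas: generated from basic formulas by `∧`, `∨`, `□`, `◇`
and implications `A → B` with `A` basic and `B` almost positive. -/
inductive AlmostPos : Fml α → Prop where
  | basic {A : Fml α} : Basic A → AlmostPos A
  | and {A B : Fml α} : AlmostPos A → AlmostPos B → AlmostPos (.and A B)
  | or {A B : Fml α} : AlmostPos A → AlmostPos B → AlmostPos (.or A B)
  | box {A : Fml α} : AlmostPos A → AlmostPos (.box A)
  | dia {A : Fml α} : AlmostPos A → AlmostPos (.dia A)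
  | imp {A B : Fml α} : Basic A → AlmostPos B → AlmostPos (.imp A B)

/-- Constructive formulas: generated from basic formulas by `∧`, `□` and
implications `A → B` with `A` almost positive and `B` constructive. -/
inductive Constructive : Fml α → Prop where
  | basic {A : Fml α} : Basic A → Constructive A
  | and {A B : Fml α} : Constructive A → Constructive B → Constructive (.and A B)
  | box {A : Fml α} : Constructive A → Constructive (.box A)
  | imp {A B : Fml α} : AlmostPos A → Constructive B → Constructive (.imp A B)

/-- Harrop formulas: atoms, `⊥`, `⊤`, closed under `∧`, `□`, and implications
`A → B` with `A` arbitrary and `B` Harrop. -/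
inductive Harrop : Fml α → Prop where
  | atom (a : α) : Harrop (.atom a)
  | top : Harrop (.top : Fml α)
  | bot : Harrop (.bot : Fml α)
  | and {A B : Fml α} : Harrop A → Harrop B → Harrop (.and A B)
  | box {A : Fml α} : Harrop A → Harrop (.box A)
  | imp (A : Fml α) {B : Fml α} : Harrop B → Harrop (.imp A B)

/-- Conjunction of a list of formulas (`⋀∅ = ⊤`). -/
def conj : List (Fml α) → Fml α
  | [] => .top
  | [A] => A
  | A :: B :: l => .and A (conj (B :: l))

/-- Disjunction of a list of formulas (`⋁∅ = ⊥`). -/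
def disj : List (Fml α) → Fml α
  | [] => .bot
  | [A] => A
  | A :: B :: l => .or A (disj (B :: l))

/-- Disjunction of a succedent (at most one formula; `⋁∅ = ⊥`). -/
def odisj : Option (Fml α) → Fml α
  | none => .bot
  | some A => A

/-- The multiset `{A_i → B_i}_{i ∈ I}` of implications of an indexed family. -/
def imps (AB : List (Fml α × Fml α)) : Multiset (Fml α) :=
  ↑(AB.map fun p => Fml.imp p.1 p.2)

/-- The conjunction `⋀_{i∈I} (A_i → B_i)` of an indexed family of implications. -/
def impConj (AB : List (Fml α × Fml α)) : Fml α :=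
  conj (AB.map fun p => Fml.imp p.1 p.2)

/-- Truth in the one-node *irreflexive* frame `𝒦ᵢ` under a Boolean valuation:
`□A` is always true and `◇A` is always false; the propositional connectives
are evaluated classically. -/
def evalI (v : α → Bool) : Fml α → Bool
  | .atom a  => v a
  | .top     => true
  | .bot     => false
  | .and A B => evalI v A && evalI v B
  | .or A B  => evalI v A || evalI v B
  | .imp A B => !evalI v A || evalI v B
  | .box _   => true
  | .dia _   => false

/-- Truth in the one-node *reflexive* frame `𝒦ᵣ` under a Boolean valuation:
`□A` and `◇A` take the value of `A`. -/
def evalR (v : α → Bool) : Fml α → Bool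
  | .atom a  => v a
  | .top     => true
  | .bot     => false
  | .and A B => evalR v A && evalR v B
  | .or A B  => evalR v A || evalR v B
  | .imp A B => !evalR v A || evalR v B
  | .box A   => evalR v A
  | .dia A   => evalR v A

/-- Validity of a sequent with respect to a one-node semantics: under every
valuation, if all formulas of the antecedent are true then so is the succedent. -/
def SeqValid (ev : (α → Bool) → Fml α → Bool) (Γ : Multiset (Fml α)) (Δ : Option (Fml α)) :
    Prop :=
  ∀ v : α → Bool, (∀ A ∈ Γ, ev v A = true) → ∃ B ∈ Δ, ev v B = true

/-- `CK+Ax` is T-free: every provable sequent is valid in the irreflexive node frame. -/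
def TFree (Ax : Fml α → Prop) : Prop :=
  ∀ (Γ : Multiset (Fml α)) (Δ : Option (Fml α)), Derives (CKSys Ax) Γ Δ → SeqValid evalI Γ Δ

/-- `CK+Ax` is T-full: every provable sequent is valid in the reflexive node
frame and the calculus proves `⇒ □p → p` and `⇒ p → ◇p`. -/
def TFull (Ax : Fml α → Prop) : Prop :=
  (∀ (Γ : Multiset (Fml α)) (Δ : Option (Fml α)), Derives (CKSys Ax) Γ Δ → SeqValid evalR Γ Δ) ∧
  (∀ a : α, Derives (CKSys Ax) 0 (some (.imp (.box (.atom a)) (.atom a)))) ∧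
  (∀ a : α, Derives (CKSys Ax) 0 (some (.imp (.atom a) (.dia (.atom a)))))

/-- Classical validity of a (modality-free) sequent: `⋀Γ → ⋁Δ` is true under
every Boolean valuation of the atoms. -/
def ClValid (Γ : Multiset (Fml α)) (Δ : Option (Fml α)) : Prop :=
  ∀ v : α → Bool, (∀ A ∈ Γ, evalI v A = true) → ∃ B ∈ Δ, evalI v B = true

/-- Nonempty conjunctions of atoms. -/
inductive AtomConj : Fml α → Prop where
  | single (a : α) : AtomConj (.atom a)
  | and {A B : Fml α} : AtomConj A → AtomConj B → AtomConj (.and A B)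

/-- Implicational Horn formulas: `⊥`, atoms, and implications `⋀Q → r` with `Q`
a nonempty multiset of atoms and `r` an atom or `⊥`. -/
inductive ImpHorn : Fml α → Prop where
  | bot : ImpHorn (.bot : Fml α)
  | atom (a : α) : ImpHorn (.atom a)
  | impAtom {A : Fml α} (hA : AtomConj A) (a : α) : ImpHorn (.imp A (.atom a))
  | impBot {A : Fml α} (hA : AtomConj A) : ImpHorn (.imp A .bot)

/-- Formulas of the form `◇^n p` with `p` an atom and `n ≥ 0`. -/
inductive DiaPowAtom : Fml α → Prop where
  | atom (a : α) : DiaPowAtom (.atom a)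
  | dia {A : Fml α} : DiaPowAtom A → DiaPowAtom (.dia A)

/-- Nonempty conjunctions `⋀_{i=1}^k ◇^{n_i} p_i` of formulas `◇^{n_i} p_i`. -/
inductive DiaConj : Fml α → Prop where
  | single {A : Fml α} : DiaPowAtom A → DiaConj A
  | and {A B : Fml α} : DiaConj A → DiaConj B → DiaConj (.and A B)

/-- Modal Horn formulas: `⊥` and atoms, closed under `□` and under implications
`A → B` with `A = ⋀_{i=1}^k ◇^{n_i} p_i` and `B` modal Horn. -/
inductive ModalHorn : Fml α → Prop where
  | bot : ModalHorn (.bot : Fml α)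
  | atom (a : α) : ModalHorn (.atom a)
  | box {A : Fml α} : ModalHorn A → ModalHorn (.box A)
  | imp {A B : Fml α} : DiaConj A → ModalHorn B → ModalHorn (.imp A B)

/-- The predicate "all atoms of the formula satisfy `P`". -/
def Fml.AtomsIn (P : α → Prop) : Fml α → Prop
  | .atom a  => P a
  | .top     => True
  | .bot     => True
  | .and A B => A.AtomsIn P ∧ B.AtomsIn P
  | .or A B  => A.AtomsIn P ∧ B.AtomsIn P
  | .imp A B => A.AtomsIn P ∧ B.AtomsIn P
  | .box A   => A.AtomsIn P
  | .dia A   => A.AtomsIn P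

/-- No `◇` occurs in the formula. -/
def Fml.DiaFree : Fml α → Prop
  | .atom _  => True
  | .top     => True
  | .bot     => True
  | .and A B => A.DiaFree ∧ B.DiaFree
  | .or A B  => A.DiaFree ∧ B.DiaFree
  | .imp A B => A.DiaFree ∧ B.DiaFree
  | .box A   => A.DiaFree
  | .dia _   => False

/-- No `□` occurs in the formula. -/
def Fml.BoxFree : Fml α → Prop
  | .atom _  => True
  | .top     => True
  | .bot     => True
  | .and A B => A.BoxFree ∧ B.BoxFree
  | .or A B  => A.BoxFree ∧ B.BoxFree
  | .imp A B => A.BoxFree ∧ B.BoxFree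
  | .box _   => False
  | .dia A   => A.BoxFree

/-- The formula is modality-free (propositional). -/
def Fml.ModFree : Fml α → Prop
  | .atom _  => True
  | .top     => True
  | .bot     => True
  | .and A B => A.ModFree ∧ B.ModFree
  | .or A B  => A.ModFree ∧ B.ModFree
  | .imp A B => A.ModFree ∧ B.ModFree
  | .box _   => False
  | .dia _   => False

/-- An angling of the language: an injection `φ ↦ ⟨φ⟩` from formulas into the
atoms whose image (the angled atoms) is disjoint from a fixed infinite set of
plain atoms. -/
structure Angling (α : Type) where
  angle : Fml α → α
  plain : Set α
  inj : Function.Injective angle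
  plain_infinite : plain.Infinite
  disjoint : ∀ φ : Fml α, angle φ ∉ plain

/-- `a` is an angled atom. -/
def Angling.Angled (S : Angling α) (a : α) : Prop := ∃ φ : Fml α, S.angle φ = a

/-- The translation `t`: `⊥^t = ⊥`, `p^t = ⟨p⟩`, `⊤^t = ⟨⊤⟩`,
`(A ∘ B)^t = (A^t ∘ B^t) ∧ ⟨A ∘ B⟩` and `(○A)^t = (○A^t) ∧ ⟨○A⟩`. -/
def Angling.tr (S : Angling α) : Fml α → Fml α
  | .atom a  => .atom (S.angle (.atom a))
  | .top     => .atom (S.angle .top)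
  | .bot     => .bot
  | .and A B => .and (.and (S.tr A) (S.tr B)) (.atom (S.angle (.and A B)))
  | .or A B  => .and (.or (S.tr A) (S.tr B)) (.atom (S.angle (.or A B)))
  | .imp A B => .and (.imp (S.tr A) (S.tr B)) (.atom (S.angle (.imp A B)))
  | .box A   => .and (.box (S.tr A)) (.atom (S.angle (.box A)))
  | .dia A   => .and (.dia (S.tr A)) (.atom (S.angle (.dia A)))

/-- Action of the standard substitution on atoms: an angled atom `⟨φ⟩` is sent
to `φ`; plain atoms are fixed. -/
noncomputable def Angling.stdAtom (S : Angling α) (a : α) : Fml α :=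
  haveI := Classical.propDecidable (∃ φ : Fml α, S.angle φ = a)
  if h : ∃ φ : Fml α, S.angle φ = a then h.choose else .atom a

/-- The standard substitution `s`: replaces each angled atom `⟨φ⟩` by `φ`,
fixes the plain atoms, and commutes with all connectives. -/
noncomputable def Angling.std (S : Angling α) : Fml α → Fml α :=
  Fml.subst S.stdAtom

/-- The Visser–Harrop property of a calculus. -/
def VisserHarrop (R : RuleSet α) : Prop :=
  ∀ (Γ : Multiset (Fml α)), (∀ A ∈ Γ, Harrop A) →
  ∀ (AB : List (Fml α × Fml α)) (C D : Fml α),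
    Derives R (Γ + imps AB) (some (.or C D)) →
    Derives R (Γ + imps AB) (some C) ∨
    Derives R (Γ + imps AB) (some D) ∨
    ∃ p ∈ AB, Derives R (Γ + imps AB) (some p.1)

/-- The disjunction property of a calculus. -/
def DisjProp (R : RuleSet α) : Prop :=
  ∀ C D : Fml α, Derives R 0 (some (.or C D)) →
    Derives R 0 (some C) ∨ Derives R 0 (some D)

/-- The formula interpretation `I(Γ ⇒ Δ) = ⋀Γ → ⋁Δ` belongs to `L` (stated for
every enumeration of the antecedent multiset as a list). -/
def interpIn (L : Set (Fml α)) (s : Seq α) : Prop :=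
  ∀ l : List (Fml α), (↑l : Multiset (Fml α)) = s.1 → Fml.imp (conj l) (odisj s.2) ∈ L

/- Named modal axioms (with `p := atom 0`, `q := atom 1`). -/
def axTa : Fml ℕ := .imp (.box (.atom 0)) (.atom 0)
def axTb : Fml ℕ := .imp (.atom 0) (.dia (.atom 0))
def axBa : Fml ℕ := .imp (.dia (.box (.atom 0))) (.atom 0)
def axBb : Fml ℕ := .imp (.atom 0) (.box (.dia (.atom 0)))
def ax4a : Fml ℕ := .imp (.box (.atom 0)) (.box (.box (.atom 0)))
def ax4b : Fml ℕ := .imp (.dia (.dia (.atom 0))) (.dia (.atom 0))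
def ax5a : Fml ℕ := .imp (.dia (.box (.atom 0))) (.box (.atom 0))
def ax5b : Fml ℕ := .imp (.dia (.atom 0)) (.box (.dia (.atom 0)))
def axDiaBot : Fml ℕ := .imp (.dia .bot) .bot
def axDiaOr : Fml ℕ :=
  .imp (.dia (.or (.atom 0) (.atom 1))) (.or (.dia (.atom 0)) (.dia (.atom 1)))
def axBoxImp : Fml ℕ :=
  .imp (.imp (.dia (.atom 0)) (.box (.atom 1))) (.box (.imp (.atom 0) (.atom 1)))

/-- The axioms of `X ⊆ {T, B, 4, 5}` in both their `a`- and `b`-versions. -/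
def XAxioms (tT tB t4 t5 : Bool) : Set (Fml ℕ) :=
  (if tT then ({axTa, axTb} : Set (Fml ℕ)) else ∅) ∪
  (if tB then ({axBa, axBb} : Set (Fml ℕ)) else ∅) ∪
  (if t4 then ({ax4a, ax4b} : Set (Fml ℕ)) else ∅) ∪
  (if t5 then ({ax5a, ax5b} : Set (Fml ℕ)) else ∅)

/-- The additional axioms of `IK` over `CK`. -/
def IKExtra : Set (Fml ℕ) := {axDiaBot, axDiaOr, axBoxImp}

/-- The right rule with premises `{Γ, φ̄_i ⇒ ψ̄_i}_{i∈I}` and conclusion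
`Γ, θ̄ ⇒ η̄`, closed under all substitutions of formulas for atoms and
multisets for the context `Γ`. -/
def rightRuleInst (prems : List (List (Fml α) × Option (Fml α)))
    (θ : List (Fml α)) (η : Option (Fml α)) : RuleSet α := fun ps c =>
  ∃ (σ : α → Fml α) (Γ : Multiset (Fml α)),
    ps = prems.map (fun pr =>
        ((Γ + ↑(pr.1.map (Fml.subst σ)) : Multiset (Fml α)), pr.2.map (Fml.subst σ))) ∧
    c = ((Γ + ↑(θ.map (Fml.subst σ)) : Multiset (Fml α)), η.map (Fml.subst σ))

/-- The left rule with premises `{Γ, φ̄_i ⇒ ψ̄_i}_{i∈I} ∪ {Γ, θ̄_j ⇒ Δ}_{j∈J}`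
and conclusion `Γ, η̄ ⇒ Δ`, closed under all substitutions of formulas for
atoms and multisets for `Γ` and `Δ`. -/
def leftRuleInst (prems : List (List (Fml α) × Option (Fml α)))
    (lefts : List (List (Fml α))) (η : List (Fml α)) : RuleSet α := fun ps c =>
  ∃ (σ : α → Fml α) (Γ : Multiset (Fml α)) (Δ : Option (Fml α)),
    ps = prems.map (fun pr =>
          ((Γ + ↑(pr.1.map (Fml.subst σ)) : Multiset (Fml α)), pr.2.map (Fml.subst σ)))
        ++ lefts.map (fun θj => ((Γ + ↑(θj.map (Fml.subst σ)) : Multiset (Fml α)), Δ)) ∧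
    c = ((Γ + ↑(η.map (Fml.subst σ)) : Multiset (Fml α)), Δ)

/-- The formula `Ax_R` of a right rule. -/
def AxRight (prems : List (List (Fml α) × Option (Fml α)))
    (θ : List (Fml α)) (η : Option (Fml α)) : Fml α :=
  .imp (.and (conj (prems.map fun pr => .imp (conj pr.1) (odisj pr.2))) (conj θ)) (odisj η)

/-- The formula `Ax_R` of a left rule. -/
def AxLeft (prems : List (List (Fml α) × Option (Fml α)))
    (lefts : List (List (Fml α))) (η : List (Fml α)) : Fml α :=
  .imp (.and (conj (prems.map fun pr => .imp (conj pr.1) (odisj pr.2))) (conj η))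
    (disj (lefts.map conj))

/-- The forgetful translation `f_i`: fixes atoms, `⊤`, `⊥`, commutes with
`∧`, `∨`, `→`, `□`, and sends every `◇A` to `⊥`. -/
def fi : Fml α → Fml α
  | .atom a  => .atom a
  | .top     => .top
  | .bot     => .bot
  | .and A B => .and (fi A) (fi B)
  | .or A B  => .or (fi A) (fi B)
  | .imp A B => .imp (fi A) (fi B)
  | .box A   => .box (fi A)
  | .dia _   => .bot

/-- The forgetful translation `f_r`: fixes atoms, `⊤`, `⊥`, commutes with
`∧`, `∨`, `→`, `□`, and sends `◇A` to `f_r A`. -/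
def fr : Fml α → Fml α
  | .atom a  => .atom a
  | .top     => .top
  | .bot     => .bot
  | .and A B => .and (fr A) (fr B)
  | .or A B  => .or (fr A) (fr B)
  | .imp A B => .imp (fr A) (fr B)
  | .box A   => .box (fr A)
  | .dia A   => fr A


/- ### Auxiliary development for statement 15 (Aczel slash) -/

section VHProof

variable {α' : Type} {Ax : Fml α' → Prop}

private lemma prems0 {R : RuleSet α'} : ∀ p ∈ ([] : List (Seq α')), Derives R p.1 p.2 := by
  simp

private lemma prems1 {R : RuleSet α'} {q : Seq α'} (h : Derives R q.1 q.2) :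
    ∀ p ∈ [q], Derives R p.1 p.2 := by
  intro p hp
  rcases List.mem_singleton.mp hp with rfl
  exact h

private lemma prems2 {R : RuleSet α'} {q r : Seq α'} (h1 : Derives R q.1 q.2)
    (h2 : Derives R r.1 r.2) : ∀ p ∈ [q, r], Derives R p.1 p.2 := by
  intro p hp
  rcases List.mem_cons.mp hp with rfl | hp
  · exact h1
  · rcases List.mem_singleton.mp hp with rfl
    exact h2

private lemma ljStep {ps : List (Seq α')} {c : Seq α'} (h : LJRule ps c)
    (hp : ∀ p ∈ ps, Derives (LJSys Ax) p.1 p.2) : Derives (LJSys Ax) c.1 c.2 :=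
  .step (Or.inl h) hp

private lemma wk {Γ : Multiset (Fml α')} {Δ} (W : Multiset (Fml α'))
    (h : Derives (LJSys Ax) Γ Δ) : Derives (LJSys Ax) (W + Γ) Δ := by
  induction W using Multiset.induction with
  | empty => simpa using h
  | cons a s ih =>
    have := ljStep (Ax := Ax) (LJRule.wL a (s + Γ) Δ) (prems1 ih)
    simpa [Multiset.cons_add] using this

private lemma wk1 (A : Fml α') {Γ Δ} (h : Derives (LJSys Ax) Γ Δ) :
    Derives (LJSys Ax) (A ::ₘ Γ) Δ := by
  simpa [Multiset.singleton_add] using wk {A} h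

private lemma idD (A : Fml α') (Γ : Multiset (Fml α')) :
    Derives (LJSys Ax) (A ::ₘ Γ) (some A) :=
  ljStep (LJRule.id Γ A) prems0

private lemma memProv {T : Multiset (Fml α')} {A} (h : A ∈ T) :
    Derives (LJSys Ax) T (some A) := by
  obtain ⟨T', rfl⟩ := Multiset.exists_cons_of_mem h
  exact idD A T'

private lemma cutD {T : Multiset (Fml α')} {Δ} (A : Fml α')
    (h1 : Derives (LJSys Ax) T (some A)) (h2 : Derives (LJSys Ax) (A ::ₘ T) Δ) :
    Derives (LJSys Ax) T Δ :=
  ljStep (LJRule.cut A T Δ) (prems2 h1 h2)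

private lemma botE {T : Multiset (Fml α')} (A : Fml α')
    (h : Derives (LJSys Ax) T none) : Derives (LJSys Ax) T (some A) :=
  ljStep (LJRule.wR A T) (prems1 h)

private lemma mpD {T : Multiset (Fml α')} {X Y : Fml α'}
    (h1 : Derives (LJSys Ax) T (some (.imp X Y)))
    (h2 : Derives (LJSys Ax) T (some X)) : Derives (LJSys Ax) T (some Y) :=
  cutD (.imp X Y) h1 (ljStep (LJRule.impL X Y T (some Y)) (prems2 h2 (idD Y T)))

private lemma impIntro {T : Multiset (Fml α')} {X Y : Fml α'}
    (h : Derives (LJSys Ax) T (some Y)) :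
    Derives (LJSys Ax) T (some (.imp X Y)) :=
  ljStep (LJRule.impR X Y T) (prems1 (wk1 X h))

private lemma impVac {T : Multiset (Fml α')} {X : Fml α'} (Y : Fml α')
    (h : Derives (LJSys Ax) (X ::ₘ T) none) :
    Derives (LJSys Ax) T (some (.imp X Y)) :=
  ljStep (LJRule.impR X Y T) (prems1 (ljStep (LJRule.wR Y (X ::ₘ T)) (prems1 h)))

private lemma andProj₁ {T : Multiset (Fml α')} {X Y : Fml α'}
    (h : Derives (LJSys Ax) T (some (.and X Y))) : Derives (LJSys Ax) T (some X) :=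
  cutD (.and X Y) h (ljStep (LJRule.andL₁ X Y T (some X)) (prems1 (idD X T)))

private lemma andProj₂ {T : Multiset (Fml α')} {X Y : Fml α'}
    (h : Derives (LJSys Ax) T (some (.and X Y))) : Derives (LJSys Ax) T (some Y) :=
  cutD (.and X Y) h (ljStep (LJRule.andL₂ X Y T (some Y)) (prems1 (idD Y T)))

private lemma botRefute {T : Multiset (Fml α')}
    (h : Derives (LJSys Ax) T (some .bot)) : Derives (LJSys Ax) T none :=
  cutD .bot h (ljStep (LJRule.botL T none) prems0)

private lemma cutAll {T Γ : Multiset (Fml α')} {Δ}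
    (h : Derives (LJSys Ax) Γ Δ) (hX : ∀ X ∈ Γ, Derives (LJSys Ax) T (some X)) :
    Derives (LJSys Ax) T Δ := by
  have main : ∀ (Γ' : Multiset (Fml α')), Derives (LJSys Ax) (T + Γ') Δ →
      (∀ X ∈ Γ', Derives (LJSys Ax) T (some X)) → Derives (LJSys Ax) T Δ := by
    intro Γ'
    induction Γ' using Multiset.induction with
    | empty => intro h _; simpa using h
    | cons a s ih =>
      intro h hX
      refine ih ?_ (fun X hX' => hX X (Multiset.mem_cons_of_mem hX'))
      refine cutD a ?_ ?_
      · have := wk s (hX a (Multiset.mem_cons_self a s))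
        rwa [add_comm] at this
      · have heq : T + (a ::ₘ s) = a ::ₘ (T + s) := by
          rw [add_comm, Multiset.cons_add, add_comm]
        rwa [heq] at h
  exact main Γ (wk T h) hX

/-- The Aczel slash relative to the theory `T` over the calculus `LJ+Ax`. -/
private def slash (Ax : Fml α' → Prop) (T : Multiset (Fml α')) : Fml α' → Prop
  | .atom a  => Derives (LJSys Ax) T (some (.atom a))
  | .top     => True
  | .bot     => Derives (LJSys Ax) T none
  | .and A B => slash Ax T A ∧ slash Ax T B
  | .or A B  => slash Ax T A ∨ slash Ax T B ∨ Derives (LJSys Ax) T none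
  | .imp A B => Derives (LJSys Ax) T (some (.imp A B)) ∧ (slash Ax T A → slash Ax T B)
  | .box A   => Derives (LJSys Ax) T (some (.box A)) ∧ slash Ax T A
  | .dia A   => Derives (LJSys Ax) T (some (.dia A)) ∧ slash Ax T A

private lemma slashProv {T : Multiset (Fml α')} :
    ∀ {A : Fml α'}, slash Ax T A → Derives (LJSys Ax) T (some A) := by
  intro A
  induction A with
  | atom a => exact fun h => h
  | top => exact fun _ => ljStep (LJRule.topR T) prems0
  | bot => exact fun h => botE _ h
  | and A B ihA ihB =>
    exact fun h => ljStep (LJRule.andR A B T) (prems2 (ihA h.1) (ihB h.2))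
  | or A B ihA ihB =>
    intro h
    rcases h with h | h | h
    · exact ljStep (LJRule.orR₁ A B T) (prems1 (ihA h))
    · exact ljStep (LJRule.orR₂ A B T) (prems1 (ihB h))
    · exact botE _ h
  | imp A B ihA ihB => exact fun h => h.1
  | box A ih => exact fun h => h.1
  | dia A ih => exact fun h => h.1

private lemma incAll {T : Multiset (Fml α')} (hInc : Derives (LJSys Ax) T none) :
    ∀ A : Fml α', slash Ax T A := by
  intro A
  induction A with
  | atom a => exact botE _ hInc
  | top => trivial
  | bot => exact hInc
  | and A B ihA ihB => exact ⟨ihA, ihB⟩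
  | or A B ihA ihB => exact Or.inr (Or.inr hInc)
  | imp A B ihA ihB => exact ⟨botE _ hInc, fun _ => ihB⟩
  | box A ih => exact ⟨botE _ hInc, ih⟩
  | dia A ih => exact ⟨botE _ hInc, ih⟩

private def sSlash (Ax : Fml α' → Prop) (T : Multiset (Fml α')) : Option (Fml α') → Prop
  | none => Derives (LJSys Ax) T none
  | some B => slash Ax T B

private lemma sInc {T : Multiset (Fml α')} (hInc : Derives (LJSys Ax) T none) :
    ∀ Δ : Option (Fml α'), sSlash Ax T Δ
  | none => hInc
  | some B => incAll hInc B

/-- `⊥`-ification of a substitution at the non-slashed atoms. -/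
private noncomputable def tauSub (Ax : Fml α' → Prop) (T : Multiset (Fml α'))
    (σ : α' → Fml α') : α' → Fml α' := fun p =>
  haveI := Classical.propDecidable (slash Ax T (σ p))
  if slash Ax T (σ p) then σ p else .bot

private lemma tauSub_pos {T : Multiset (Fml α')} {σ : α' → Fml α'} {a : α'}
    (h : slash Ax T (σ a)) : tauSub Ax T σ a = σ a := by
  unfold tauSub
  exact if_pos h

private lemma tauSub_neg {T : Multiset (Fml α')} {σ : α' → Fml α'} {a : α'}
    (h : ¬ slash Ax T (σ a)) : tauSub Ax T σ a = .bot := by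
  unfold tauSub
  exact if_neg h

private lemma basicRefute {T : Multiset (Fml α')} {σ : α' → Fml α'} {b : Fml α'}
    (hb : Basic b) (hmf : b.ModFree) (hn : ¬ slash Ax T (b.subst σ)) :
    Derives (LJSys Ax) ((b.subst (tauSub Ax T σ)) ::ₘ T) none := by
  induction hb with
  | atom a =>
    have heq : (Fml.atom a).subst (tauSub Ax T σ) = .bot := tauSub_neg hn
    rw [heq]
    exact ljStep (LJRule.botL T none) prems0
  | top => exact absurd trivial hn
  | bot => exact ljStep (LJRule.botL T none) prems0
  | @and A B hA hB ihA ihB =>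
    rcases not_and_or.mp hn with h | h
    · exact ljStep (LJRule.andL₁ (A.subst _) (B.subst _) T none) (prems1 (ihA hmf.1 h))
    · exact ljStep (LJRule.andL₂ (A.subst _) (B.subst _) T none) (prems1 (ihB hmf.2 h))
  | @or A B hA hB ihA ihB =>
    have h1 : ¬ slash Ax T (A.subst σ) := fun h => hn (Or.inl h)
    have h2 : ¬ slash Ax T (B.subst σ) := fun h => hn (Or.inr (Or.inl h))
    exact ljStep (LJRule.orL (A.subst _) (B.subst _) T none)
      (prems2 (ihA hmf.1 h1) (ihB hmf.2 h2))
  | dia _ _ => exact absurd hmf (by simp [Fml.ModFree])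

private lemma basicSigmaTau {T : Multiset (Fml α')} {σ : α' → Fml α'} {b : Fml α'}
    (hb : Basic b) (hmf : b.ModFree) (h : slash Ax T (b.subst σ)) :
    slash Ax T (b.subst (tauSub Ax T σ)) := by
  induction hb with
  | atom a =>
    have heq : (Fml.atom a).subst (tauSub Ax T σ) = σ a := tauSub_pos h
    rw [heq]; exact h
  | top => trivial
  | bot => exact h
  | and hA hB ihA ihB => exact ⟨ihA hmf.1 h.1, ihB hmf.2 h.2⟩
  | or hA hB ihA ihB =>
    rcases h with h | h | h
    · exact Or.inl (ihA hmf.1 h)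
    · exact Or.inr (Or.inl (ihB hmf.2 h))
    · exact Or.inr (Or.inr h)
  | dia _ _ => exact absurd hmf (by simp [Fml.ModFree])

private lemma basicTauSigma {T : Multiset (Fml α')} {σ : α' → Fml α'} {b : Fml α'}
    (hb : Basic b) (hmf : b.ModFree) (h : slash Ax T (b.subst (tauSub Ax T σ))) :
    slash Ax T (b.subst σ) := by
  induction hb with
  | atom a =>
    by_cases hs : slash Ax T (σ a)
    · exact hs
    · have heq : (Fml.atom a).subst (tauSub Ax T σ) = .bot := tauSub_neg hs
      rw [heq] at h
      exact incAll h _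
  | top => trivial
  | bot => exact h
  | and hA hB ihA ihB => exact ⟨ihA hmf.1 h.1, ihB hmf.2 h.2⟩
  | or hA hB ihA ihB =>
    rcases h with h | h | h
    · exact Or.inl (ihA hmf.1 h)
    · exact Or.inr (Or.inl (ihB hmf.2 h))
    · exact Or.inr (Or.inr h)
  | dia _ _ => exact absurd hmf (by simp [Fml.ModFree])

private lemma apSigmaTau {T : Multiset (Fml α')} {σ : α' → Fml α'} {P : Fml α'}
    (hP : AlmostPos P) (hmf : P.ModFree) (h : slash Ax T (P.subst σ)) :
    slash Ax T (P.subst (tauSub Ax T σ)) := by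
  induction hP with
  | basic hb => exact basicSigmaTau hb hmf h
  | and hA hB ihA ihB => exact ⟨ihA hmf.1 h.1, ihB hmf.2 h.2⟩
  | or hA hB ihA ihB =>
    rcases h with h | h | h
    · exact Or.inl (ihA hmf.1 h)
    · exact Or.inr (Or.inl (ihB hmf.2 h))
    · exact Or.inr (Or.inr h)
  | box _ _ => exact absurd hmf (by simp [Fml.ModFree])
  | dia _ _ => exact absurd hmf (by simp [Fml.ModFree])
  | @imp b Q hb hQ ihQ =>
    refine ⟨?_, fun x => ihQ hmf.2 (h.2 (basicTauSigma hb hmf.1 x))⟩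
    by_cases hsb : slash Ax T (b.subst σ)
    · exact impIntro (slashProv (ihQ hmf.2 (h.2 hsb)))
    · exact impVac _ (basicRefute hb hmf.1 hsb)

private lemma consSlash {T : Multiset (Fml α')} {σ : α' → Fml α'} {c : Fml α'}
    (hc : Constructive c) (hmf : c.ModFree)
    (hτ : Derives (LJSys Ax) T (some (c.subst (tauSub Ax T σ))))
    (hσ : Derives (LJSys Ax) T (some (c.subst σ))) :
    slash Ax T (c.subst σ) := by
  induction hc with
  | @basic b hb =>
    by_cases hs : slash Ax T (b.subst σ)
    · exact hs
    · exact incAll (cutD _ hτ (basicRefute hb hmf hs)) _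
  | and hA hB ihA ihB =>
    exact ⟨ihA hmf.1 (andProj₁ hτ) (andProj₁ hσ), ihB hmf.2 (andProj₂ hτ) (andProj₂ hσ)⟩
  | box _ _ => exact absurd hmf (by simp [Fml.ModFree])
  | @imp P B hP hB ihB =>
    refine ⟨hσ, fun hsP => ?_⟩
    exact ihB hmf.2 (mpD hτ (slashProv (apSigmaTau hP hmf.1 hsP)))
      (mpD hσ (slashProv hsP))

private lemma harropSlash {T : Multiset (Fml α')} {G : Fml α'}
    (hG : Harrop G) (hmf : G.ModFree) (h : Derives (LJSys Ax) T (some G)) :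
    slash Ax T G := by
  induction hG with
  | atom a => exact h
  | top => trivial
  | bot => exact botRefute h
  | and hA hB ihA ihB => exact ⟨ihA hmf.1 (andProj₁ h), ihB hmf.2 (andProj₂ h)⟩
  | box _ _ => exact absurd hmf (by simp [Fml.ModFree])
  | imp A hB ihB => exact ⟨h, fun hsA => ihB hmf.2 (mpD h (slashProv hsA))⟩

private lemma soundSlash {T : Multiset (Fml α')}
    (hAx : ∀ A, Ax A → Constructive A ∧ A.ModFree) {Pi : Multiset (Fml α')}
    {Δ : Option (Fml α')} (h : Derives (LJSys Ax) Pi Δ) :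
    (∀ A ∈ Pi, slash Ax T A) → sSlash Ax T Δ := by
  induction h with
  | @step ps c hr hp ih =>
    intro hPi
    rcases hr with hr | hr
    · cases hr with
      | id Γ A => exact hPi A (Multiset.mem_cons_self A Γ)
      | botL Γ Δ => exact sInc (hPi _ (Multiset.mem_cons_self _ Γ)) Δ
      | topR Γ => trivial
      | wL A Γ Δ =>
        exact ih (Γ, Δ) (by simp) (fun X hX => hPi X (Multiset.mem_cons_of_mem hX))
      | wR A Γ => exact incAll (ih (Γ, none) (by simp) hPi) A
      | cL A Γ Δ =>
        refine ih (A ::ₘ A ::ₘ Γ, Δ) (by simp) ?_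
        intro X hX
        rcases Multiset.mem_cons.mp hX with rfl | hX
        · exact hPi X (Multiset.mem_cons_self X Γ)
        · exact hPi X hX
      | cut A Γ Δ =>
        have hA : slash Ax T A := ih (Γ, some A) (by simp) hPi
        refine ih (A ::ₘ Γ, Δ) (by simp) ?_
        intro X hX
        rcases Multiset.mem_cons.mp hX with rfl | hX
        · exact hA
        · exact hPi X hX
      | andL₁ A B Γ Δ =>
        refine ih (A ::ₘ Γ, Δ) (by simp) ?_
        intro X hX
        rcases Multiset.mem_cons.mp hX with rfl | hX
        · exact (hPi _ (Multiset.mem_cons_self _ Γ)).1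
        · exact hPi X (Multiset.mem_cons_of_mem hX)
      | andL₂ A B Γ Δ =>
        refine ih (B ::ₘ Γ, Δ) (by simp) ?_
        intro X hX
        rcases Multiset.mem_cons.mp hX with rfl | hX
        · exact (hPi _ (Multiset.mem_cons_self _ Γ)).2
        · exact hPi X (Multiset.mem_cons_of_mem hX)
      | andR A B Γ => exact ⟨ih (Γ, some A) (by simp) hPi, ih (Γ, some B) (by simp) hPi⟩
      | orL A B Γ Δ =>
        rcases hPi _ (Multiset.mem_cons_self _ Γ) with hA | hB | hInc
        · refine ih (A ::ₘ Γ, Δ) (by simp) ?_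
          intro X hX
          rcases Multiset.mem_cons.mp hX with rfl | hX
          · exact hA
          · exact hPi X (Multiset.mem_cons_of_mem hX)
        · refine ih (B ::ₘ Γ, Δ) (by simp) ?_
          intro X hX
          rcases Multiset.mem_cons.mp hX with rfl | hX
          · exact hB
          · exact hPi X (Multiset.mem_cons_of_mem hX)
        · exact sInc hInc Δ
      | orR₁ A B Γ => exact Or.inl (ih (Γ, some A) (by simp) hPi)
      | orR₂ A B Γ => exact Or.inr (Or.inl (ih (Γ, some B) (by simp) hPi))
      | impL A B Γ Δ =>
        have hi := hPi _ (Multiset.mem_cons_self _ Γ)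
        have hΓ : ∀ X ∈ Γ, slash Ax T X := fun X hX => hPi X (Multiset.mem_cons_of_mem hX)
        have hA : slash Ax T A := ih (Γ, some A) (by simp) hΓ
        refine ih (B ::ₘ Γ, Δ) (by simp) ?_
        intro X hX
        rcases Multiset.mem_cons.mp hX with rfl | hX
        · exact hi.2 hA
        · exact hΓ X hX
      | impR A B Γ =>
        refine ⟨?_, fun hsA => ?_⟩
        · refine cutAll (Derives.step (Or.inl (LJRule.impR A B Γ)) hp) ?_
          exact fun X hX => slashProv (hPi X hX)
        · refine ih (A ::ₘ Γ, some B) (by simp) ?_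
          intro X hX
          rcases Multiset.mem_cons.mp hX with rfl | hX
          · exact hsA
          · exact hPi X hX
    · obtain ⟨-, A, σ, hA, rfl⟩ := hr
      have hprov : ∀ ρ : α' → Fml α', Derives (LJSys Ax) T (some (A.subst ρ)) := by
        intro ρ
        have hax : axRule Ax [] ((0 : Multiset (Fml α')), some (A.subst ρ)) :=
          ⟨rfl, A, ρ, hA, rfl⟩
        have h0 : Derives (LJSys Ax) (0 : Multiset (Fml α')) (some (A.subst ρ)) :=
          Derives.step (c := ((0 : Multiset (Fml α')), some (A.subst ρ))) (Or.inr hax) prems0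
        simpa using wk T h0
      exact consSlash (hAx A hA).1 (hAx A hA).2 (hprov _) (hprov σ)

end VHProof


/-- every calculus `LJ+𝒞` with `𝒞` a finite set of constructive
modality-free formulas has the Visser–Harrop property; in particular `LJ`
itself has the Visser–Harrop property and hence the disjunction property. -/
theorem statement_15 :
    (∀ (CS : Finset (Fml ℕ)), (∀ A ∈ CS, Constructive A ∧ A.ModFree) →
      ∀ (Γ : Multiset (Fml ℕ)), (∀ A ∈ Γ, Harrop A ∧ A.ModFree) →
      ∀ (AB : List (Fml ℕ × Fml ℕ)), (∀ p ∈ AB, p.1.ModFree ∧ p.2.ModFree) →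
      ∀ C D : Fml ℕ, C.ModFree → D.ModFree →
        Derives (LJSys (· ∈ CS)) (Γ + imps AB) (some (.or C D)) →
        Derives (LJSys (· ∈ CS)) (Γ + imps AB) (some C) ∨
        Derives (LJSys (· ∈ CS)) (Γ + imps AB) (some D) ∨
        ∃ p ∈ AB, Derives (LJSys (· ∈ CS)) (Γ + imps AB) (some p.1)) ∧
    (∀ C D : Fml ℕ, C.ModFree → D.ModFree →
      Derives (LJSys (fun _ : Fml ℕ => False)) 0 (some (.or C D)) →
      Derives (LJSys (fun _ : Fml ℕ => False)) 0 (some C) ∨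
      Derives (LJSys (fun _ : Fml ℕ => False)) 0 (some D)) := by
  have vh : ∀ (Ax : Fml ℕ → Prop), (∀ A, Ax A → Constructive A ∧ A.ModFree) →
      ∀ (Γ : Multiset (Fml ℕ)), (∀ A ∈ Γ, Harrop A ∧ A.ModFree) →
      ∀ (AB : List (Fml ℕ × Fml ℕ)),
      ∀ C D : Fml ℕ,
        Derives (LJSys Ax) (Γ + imps AB) (some (.or C D)) →
        Derives (LJSys Ax) (Γ + imps AB) (some C) ∨
        Derives (LJSys Ax) (Γ + imps AB) (some D) ∨
        ∃ p ∈ AB, Derives (LJSys Ax) (Γ + imps AB) (some p.1) := by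
    intro Ax hAx Γ hΓ AB C D h
    set T : Multiset (Fml ℕ) := Γ + imps AB with hT
    by_cases hex : ∃ p ∈ AB, Derives (LJSys Ax) T (some p.1)
    · exact Or.inr (Or.inr hex)
    · push_neg at hex
      have hall : ∀ A ∈ T, slash Ax T A := by
        intro A hA
        rcases Multiset.mem_add.mp hA with hA' | hA'
        · exact harropSlash (hΓ A hA').1 (hΓ A hA').2 (memProv hA)
        · rw [imps] at hA'
          rcases List.mem_map.mp (Multiset.mem_coe.mp hA') with ⟨p, hp, rfl⟩
          exact ⟨memProv hA, fun hs => absurd (slashProv hs) (hex p hp)⟩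
      have hs : slash Ax T (.or C D) := soundSlash hAx h hall
      rcases hs with hs | hs | hs
      · exact Or.inl (slashProv hs)
      · exact Or.inr (Or.inl (slashProv hs))
      · exact Or.inl (botE _ hs)
  constructor
  · intro CS hCS Γ hΓ AB _ C D _ _ h
    exact vh (· ∈ CS) hCS Γ hΓ AB C D h
  · intro C D _ _ h
    have h' : Derives (LJSys (fun _ : Fml ℕ => False)) ((0 : Multiset (Fml ℕ)) + imps [])
        (some (.or C D)) := by simpa [imps] using h
    rcases vh (fun _ => False) (fun A hA => hA.elim) 0 (by simp) [] C D h' with h'' | h'' | h''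
    · exact Or.inl (by simpa [imps] using h'')
    · exact Or.inr (by simpa [imps] using h'')
    · simp at h''


end UPT
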